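/- Let X₁, X₂, … be a strictly stationary and ergodic sequence of real random variables with finite essential supremum γ = sup{x : P(X₁ ≤ x) < 1} < ∞, and let (kₙ) be integers with 1 ≤ kₙ ≤ n and kₙ/n → 1. Then X_{kₙ:n} → γ almost surely as n → ∞. -/

import Mathlib

open MeasureTheory Filter Set
open scoped Topology ENNReal

noncomputable section

/-- The shift map on real sequences. -/
def seqShift (y : ℕ → ℝ) : ℕ → ℝ := fun n => y (n + 1)

/-- The path map associating to each sample point the sequence of observations. -/
def path {Ω : Type*} (X : ℕ → Ω → ℝ) (ω : Ω) : ℕ → ℝ := fun n => X n ω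

/-- The `k`-th smallest value (k counted from 1) among `x 0, …, x (n-1)`. -/
def ordStat (k n : ℕ) (x : ℕ → ℝ) : ℝ :=
  ((List.ofFn (fun i : Fin n => x i)).insertionSort (· ≤ ·)).getD (k - 1) 0

/-- Number of observations among `x 0, …, x (n-1)` in the left `a`-neighborhood of the
`k`-th order statistic. -/
def nearCount (k n : ℕ) (a : ℝ) (x : ℕ → ℝ) : ℕ :=
  ((Finset.range n).filter
    (fun i => ordStat k n x - a < x i ∧ x i < ordStat k n x)).card

/-- Sum of observations among `x 0, …, x (n-1)` in the left `a`-neighborhood of the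
`k`-th order statistic. -/
def nearSum (k n : ℕ) (a : ℝ) (x : ℕ → ℝ) : ℝ :=
  ∑ i ∈ Finset.range n,
    if ordStat k n x - a < x i ∧ x i < ordStat k n x then x i else 0

/-- The right endpoint `sup {x : P(X ≤ x) < 1}` of the support of `X`, as an extended real. -/
def rightEndpoint {Ω : Type*} [MeasurableSpace Ω] (μ : Measure Ω) (X : Ω → ℝ) : EReal :=
  sSup ((fun r : ℝ => (r : EReal)) '' {r : ℝ | μ {ω | X ω ≤ r} < 1})

/-! For the upper bound, almost surely every observation is at most `γ`, hence so is every
order statistic. For `c < γ` the event `{X₀ > c}` has probability `p > 0`, and the one-sided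
ergodic theorem `liminf (1/n) #{i < n | Xᵢ > c} ≥ p` shows that eventually fewer than
`(1 - p/2) n < kₙ` of the first `n` observations are `≤ c`, i.e. `X_{kₙ:n} > c`.

That one-sided ergodic theorem follows from the maximal ergodic theorem: the lower limit of the
Birkhoff averages of a bounded function `g` is invariant, hence almost surely a constant `c` by
ergodicity, and if `c < r < ∫ g`, the maximal ergodic theorem applied to `r - g` would give
`r - ∫ g ≥ 0`. -/

open Finset

section OrderStatistics

lemma countP_ofFn_eq_card_filter {α : Type*} (n : ℕ) (x : ℕ → α) (p : α → Prop)
    [DecidablePred p] :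
    (List.ofFn fun i : Fin n => x i).countP (fun a => decide (p a)) = #{i ∈ range n | p (x i)} := by
  induction n with
  | zero => simp
  | succ n ih =>
    rw [List.ofFn_succ_last, List.countP_append]
    simp only [Fin.val_castSucc, Fin.val_last]
    rw [ih, range_add_one, filter_insert]
    split_ifs with h <;> simp [h, card_insert_of_notMem]

lemma exists_ordStat_eq {k n : ℕ} (hk : 1 ≤ k) (hkn : k ≤ n) (x : ℕ → ℝ) :
    ∃ i < n, ordStat k n x = x i := by
  set s := (List.ofFn fun i : Fin n => x i).insertionSort (· ≤ ·)
  have hlt : k - 1 < s.length := by simp [s]; omega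
  obtain ⟨i, hi⟩ := List.mem_ofFn.mp <| (List.mem_insertionSort _).mp (List.getElem_mem hlt)
  exact ⟨i, i.isLt, by rw [ordStat, List.getD_eq_getElem _ _ hlt, ← hi]⟩

lemma lt_ordStat_of_card_lt {k n : ℕ} (hk : 1 ≤ k) (hkn : k ≤ n) {x : ℕ → ℝ} {c : ℝ}
    (h : #{i ∈ range n | x i ≤ c} < k) : c < ordStat k n x := by
  by_contra! hle
  set s := (List.ofFn fun i : Fin n => x i).insertionSort (· ≤ ·)
  have hlt : k - 1 < s.length := by simp [s]; omega
  rw [ordStat, List.getD_eq_getElem _ _ hlt] at hle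
  have hsorted : s.Pairwise (· ≤ ·) := List.pairwise_insertionSort _ _
  have htake : ∀ a ∈ s.take k, a ≤ c := by
    intro a ha
    obtain ⟨i, hi, rfl⟩ := List.mem_take_iff_getElem.mp ha
    exact (hsorted.rel_get_of_le (a := ⟨i, by omega⟩) (b := ⟨k - 1, hlt⟩) (by simp; omega)).trans
      hle
  have hcount : k ≤ s.countP (fun a => decide (a ≤ c)) := calc
    k = (s.take k).length := by simp; omega
    _ = (s.take k).countP (fun a => decide (a ≤ c)) :=
        (List.countP_eq_length.mpr (by simpa using htake)).symm
    _ ≤ s.countP (fun a => decide (a ≤ c)) := (List.take_sublist k s).countP_le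
  rw [(List.perm_insertionSort _ _).countP_eq, countP_ofFn_eq_card_filter] at hcount
  omega

end OrderStatistics

section MaximalErgodic

variable {α : Type*} {T : α → α} {g : α → ℝ}

/-- `garsiaMax T g n = max 0 S₁ … Sₙ`, where `Sₖ = birkhoffSum T g k`. -/
def garsiaMax (T : α → α) (g : α → ℝ) : ℕ → α → ℝ
  | 0, _ => 0
  | n + 1, x => max 0 (g x + garsiaMax T g n (T x))

lemma garsiaMax_succ (n : ℕ) (x : α) :
    garsiaMax T g (n + 1) x = max 0 (g x + garsiaMax T g n (T x)) := rfl

lemma garsiaMax_nonneg (n : ℕ) (x : α) : 0 ≤ garsiaMax T g n x := by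
  cases n with
  | zero => rfl
  | succ n => exact le_max_left _ _

lemma garsiaMax_le_succ (n : ℕ) (x : α) : garsiaMax T g n x ≤ garsiaMax T g (n + 1) x := by
  induction n generalizing x with
  | zero => exact garsiaMax_nonneg 1 x
  | succ n ih =>
    rw [garsiaMax_succ, garsiaMax_succ (n + 1)]
    gcongr
    exact ih (T x)

lemma birkhoffSum_le_garsiaMax (n : ℕ) (x : α) : birkhoffSum T g n x ≤ garsiaMax T g n x := by
  induction n generalizing x with
  | zero => rfl
  | succ n ih =>
    rw [birkhoffSum_succ', garsiaMax_succ]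
    exact le_max_of_le_right (by linarith [ih (T x)])

lemma garsiaMax_sub_garsiaMax_apply_le {n : ℕ} {x : α} (hx : 0 < garsiaMax T g n x) :
    garsiaMax T g n x - garsiaMax T g n (T x) ≤ g x := by
  cases n with
  | zero => exact absurd hx (lt_irrefl 0)
  | succ n =>
    have hmax : garsiaMax T g (n + 1) x = g x + garsiaMax T g n (T x) := by
      rw [garsiaMax_succ] at hx ⊢
      exact max_eq_right ((lt_max_iff.mp hx).resolve_left (lt_irrefl 0)).le
    linarith [garsiaMax_le_succ (T := T) (g := g) n (T x)]

variable [MeasurableSpace α] {μ : Measure α}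

lemma measurable_garsiaMax (hT : Measurable T) (hg : Measurable g) (n : ℕ) :
    Measurable (garsiaMax T g n) := by
  induction n with
  | zero => exact measurable_const
  | succ n ih => exact measurable_const.max (hg.add (ih.comp hT))

lemma integrable_garsiaMax (hT : MeasurePreserving T μ μ) (hg : Integrable g μ) (n : ℕ) :
    Integrable (garsiaMax T g n) μ := by
  induction n with
  | zero => exact integrable_zero _ _ _
  | succ n ih => exact (integrable_zero _ _ _).sup (hg.add (hT.integrable_comp_of_integrable ih))

lemma setIntegral_garsiaMax_pos_nonneg (hT : MeasurePreserving T μ μ) (hgm : Measurable g)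
    (hg : Integrable g μ) (n : ℕ) : 0 ≤ ∫ x in {x | 0 < garsiaMax T g n x}, g x ∂μ := by
  set M := garsiaMax T g n
  set E := {x | 0 < M x}
  have hMm : Measurable M := measurable_garsiaMax hT.measurable hgm n
  have hM : Integrable M μ := integrable_garsiaMax hT hg n
  have hMT : Integrable (M ∘ T) μ := hT.integrable_comp_of_integrable hM
  have hE : MeasurableSet E := measurableSet_lt measurable_const hMm
  have hM_comp : ∫ x, M (T x) ∂μ = ∫ x, M x ∂μ := by
    rw [← integral_map hT.measurable.aemeasurable (hT.map_eq ▸ hMm.aestronglyMeasurable),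
      hT.map_eq]
  calc 0 = ∫ x, M x ∂μ - ∫ x, M (T x) ∂μ := by rw [hM_comp, sub_self]
    _ ≤ ∫ x in E, M x ∂μ - ∫ x in E, M (T x) ∂μ := by
      refine sub_le_sub (setIntegral_eq_integral_of_forall_compl_eq_zero fun x hx =>
        le_antisymm (not_lt.mp hx) (garsiaMax_nonneg n x)).ge ?_
      exact setIntegral_le_integral hMT (ae_of_all _ fun x => garsiaMax_nonneg n (T x))
    _ = ∫ x in E, (M x - M (T x)) ∂μ := (integral_sub hM.integrableOn hMT.integrableOn).symm
    _ ≤ ∫ x in E, g x ∂μ :=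
      setIntegral_mono_on (hM.integrableOn.sub hMT.integrableOn) hg.integrableOn hE
        fun x hx => garsiaMax_sub_garsiaMax_apply_le hx

/-- The maximal ergodic theorem. -/
theorem integral_nonneg_of_ae_exists_birkhoffSum_pos (hT : MeasurePreserving T μ μ)
    (hgm : Measurable g) (hg : Integrable g μ) (h : ∀ᵐ x ∂μ, ∃ n, 0 < birkhoffSum T g n x) :
    0 ≤ ∫ x, g x ∂μ := by
  set E : ℕ → Set α := fun n => {x | 0 < garsiaMax T g n x}
  have hE : ∀ n, MeasurableSet (E n) := fun n =>
    measurableSet_lt measurable_const (measurable_garsiaMax hT.measurable hgm n)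
  have hE_mono : Monotone E := monotone_nat_of_le_succ fun n x hx =>
    hx.trans_le (garsiaMax_le_succ n x)
  have hE_univ : (⋃ n, E n) =ᵐ[μ] (univ : Set α) := by
    refine ae_eq_univ.mpr (measure_eq_zero_iff_ae_notMem.mpr ?_)
    filter_upwards [h] with x ⟨n, hn⟩
    exact not_not.mpr (mem_iUnion.mpr ⟨n, hn.trans_le (birkhoffSum_le_garsiaMax n x)⟩)
  rw [← setIntegral_univ, ← setIntegral_congr_set hE_univ]
  exact ge_of_tendsto' (tendsto_setIntegral_of_monotone hE hE_mono hg.integrableOn)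
    fun n => setIntegral_garsiaMax_pos_nonneg hT hgm hg n

end MaximalErgodic

section LowerBirkhoff

lemma liminf_coe_le_liminf_coe_add_of_tendsto_zero {u v : ℕ → ℝ} (hv : Tendsto v atTop (𝓝 0)) :
    liminf (fun n => (u n : EReal)) atTop ≤ liminf (fun n => ((u n + v n : ℝ) : EReal)) atTop := by
  have hv' : liminf (fun n => (v n : EReal)) atTop = 0 :=
    ((continuous_coe_real_ereal.tendsto 0).comp hv).liminf_eq
  calc liminf (fun n => (u n : EReal)) atTop
      = liminf (fun n => (u n : EReal)) atTop + liminf (fun n => (v n : EReal)) atTop := by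
        rw [hv', add_zero]
    _ ≤ liminf ((fun n => (u n : EReal)) + fun n => (v n : EReal)) atTop := EReal.le_liminf_add
    _ = liminf (fun n => ((u n + v n : ℝ) : EReal)) atTop := by
        simp only [Pi.add_def, EReal.coe_add]

variable {α : Type*} {T : α → α} {g : α → ℝ}

lemma liminf_birkhoffAverage_apply_eq (hg : Bornology.IsBounded (range g)) (x : α) :
    liminf (fun n => ((birkhoffAverage ℝ T g n (T x) : ℝ) : EReal)) atTop =
      liminf (fun n => ((birkhoffAverage ℝ T g n x : ℝ) : EReal)) atTop := by
  have h := tendsto_birkhoffAverage_apply_sub_birkhoffAverage' ℝ hg T x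
  refine le_antisymm ?_ ?_
  · refine (liminf_coe_le_liminf_coe_add_of_tendsto_zero (by simpa using h.neg)).trans_eq ?_
    simp only [add_sub_cancel]
  · refine (liminf_coe_le_liminf_coe_add_of_tendsto_zero h).trans_eq ?_
    simp only [add_sub_cancel]

lemma birkhoffSum_const_sub_pos_of_birkhoffAverage_lt {r : ℝ} {n : ℕ} {x : α} (hn : n ≠ 0)
    (h : birkhoffAverage ℝ T g n x < r) : 0 < birkhoffSum T (fun y => r - g y) n x := by
  rw [birkhoffAverage, smul_eq_mul, inv_mul_lt_iff₀ (by positivity)] at h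
  simp only [birkhoffSum, sum_sub_distrib, sum_const, card_range, nsmul_eq_mul] at h ⊢
  linarith

variable [MeasurableSpace α] {μ : Measure α}

lemma measurable_birkhoffAverage (hT : Measurable T) (hg : Measurable g) (n : ℕ) :
    Measurable (birkhoffAverage ℝ T g n) :=
  (Finset.measurable_sum _ fun k _ => hg.comp (hT.iterate k)).const_smul ((n : ℝ)⁻¹)

theorem Ergodic.ae_eventually_lt_birkhoffAverage [IsProbabilityMeasure μ] (hT : Ergodic T μ)
    (hgm : Measurable g) (hg : Bornology.IsBounded (range g)) {q : ℝ} (hq : q < ∫ x, g x ∂μ) :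
    ∀ᵐ x ∂μ, ∀ᶠ n in atTop, q < birkhoffAverage ℝ T g n x := by
  set L : α → EReal := fun x => liminf (fun n => ((birkhoffAverage ℝ T g n x : ℝ) : EReal)) atTop
  have hLm : Measurable L := Measurable.liminf fun n =>
    measurable_coe_real_ereal.comp (measurable_birkhoffAverage hT.measurable hgm n)
  obtain ⟨c, hc⟩ := hT.toPreErgodic.ae_eq_const_of_ae_eq_comp hLm
    (funext fun x => liminf_birkhoffAverage_apply_eq hg x)
  obtain ⟨C, hC⟩ := hg.exists_norm_le
  have hgi : Integrable g μ :=
    Integrable.of_bound hgm.aestronglyMeasurable C (ae_of_all _ fun x => hC _ (mem_range_self x))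
  have hc_ge : ((∫ x, g x ∂μ : ℝ) : EReal) ≤ c := by
    by_contra! hlt
    obtain ⟨r, hcr, hr⟩ := EReal.lt_iff_exists_real_btwn.mp hlt
    have hpos : ∀ᵐ x ∂μ, ∃ n, 0 < birkhoffSum T (fun y => r - g y) n x := by
      filter_upwards [hc] with x hx
      have hfreq : ∃ᶠ n in atTop, ((birkhoffAverage ℝ T g n x : ℝ) : EReal) < r :=
        frequently_lt_of_liminf_lt (by isBoundedDefault) (hx.trans_lt hcr)
      obtain ⟨n, hlt, hn⟩ := (hfreq.and_eventually (eventually_ne_atTop 0)).exists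
      exact ⟨n, birkhoffSum_const_sub_pos_of_birkhoffAverage_lt hn (EReal.coe_lt_coe_iff.mp hlt)⟩
    have hint := integral_nonneg_of_ae_exists_birkhoffSum_pos hT.toMeasurePreserving
      (measurable_const.sub hgm) ((integrable_const r).sub hgi) hpos
    simp only [Pi.sub_apply] at hint
    rw [integral_sub (integrable_const r) hgi, integral_const, probReal_univ, one_smul] at hint
    exact absurd (EReal.coe_lt_coe_iff.mp hr) (not_lt.mpr (by linarith))
  filter_upwards [hc] with x hx
  have hqL : (q : EReal) < L x := by
    rw [hx]
    exact (EReal.coe_lt_coe_iff.mpr hq).trans_le hc_ge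
  exact (eventually_lt_of_lt_liminf hqL).mono fun n hn => EReal.coe_lt_coe_iff.mp hn

end LowerBirkhoff

section Shift

lemma seqShift_iterate_apply (i j : ℕ) (y : ℕ → ℝ) : seqShift^[i] y j = y (j + i) := by
  induction i generalizing y with
  | zero => rfl
  | succ i ih => rw [Function.iterate_succ_apply, ih]; rfl

lemma birkhoffSum_seqShift_indicator (c : ℝ) (n : ℕ) (y : ℕ → ℝ) :
    birkhoffSum seqShift ({z : ℕ → ℝ | c < z 0}.indicator (1 : (ℕ → ℝ) → ℝ)) n y =
      #{i ∈ range n | c < y i} := by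
  simp [birkhoffSum, Set.indicator_apply, seqShift_iterate_apply]

variable {ν : Measure (ℕ → ℝ)}

lemma ae_forall_apply_le_of_measurePreserving (hT : MeasurePreserving seqShift ν ν) {γ : ℝ}
    (hγ : ν {y | γ < y 0} = 0) : ∀ᵐ y ∂ν, ∀ i, y i ≤ γ := by
  refine ae_all_iff.mpr fun i => ?_
  have hi : ν (seqShift^[i] ⁻¹' {y | γ < y 0}) = 0 := by
    rwa [(hT.iterate i).measure_preimage
      (measurableSet_lt measurable_const (measurable_pi_apply 0)).nullMeasurableSet]
  filter_upwards [measure_eq_zero_iff_ae_notMem.mp hi] with y hy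
  simpa [seqShift_iterate_apply] using hy

variable [IsProbabilityMeasure ν]

lemma ae_eventually_lt_ordStat (herg : Ergodic seqShift ν) {c : ℝ} (hc : ν {y | y 0 ≤ c} < 1)
    {k : ℕ → ℕ} (hk : ∀ n, 1 ≤ n → 1 ≤ k n ∧ k n ≤ n)
    (hk1 : Tendsto (fun n => (k n : ℝ) / n) atTop (𝓝 1)) :
    ∀ᵐ y ∂ν, ∀ᶠ n in atTop, c < ordStat (k n) n y := by
  set A : Set (ℕ → ℝ) := {z | c < z 0} with hA_def
  have hA : MeasurableSet A := measurableSet_lt measurable_const (measurable_pi_apply 0)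
  have hp : 0 < ν.real A := by
    have hAc : Aᶜ = {y | y 0 ≤ c} := by ext; simp [A]
    refine ENNReal.toReal_pos ?_ (measure_ne_top ν A)
    rw [← compl_compl A, prob_compl_eq_one_sub hA.compl, hAc]
    exact (tsub_pos_iff_lt.mpr hc).ne'
  have hbdd : Bornology.IsBounded (range (A.indicator (1 : (ℕ → ℝ) → ℝ))) :=
    (Metric.isBounded_Icc (0 : ℝ) 1).subset <| range_subset_iff.mpr fun y => by
      by_cases hy : y ∈ A <;> simp [hy]
  have hfreq := herg.ae_eventually_lt_birkhoffAverage (g := A.indicator 1)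
    (measurable_const.indicator hA) hbdd (q := ν.real A / 2)
    (by rw [integral_indicator_one hA]; linarith)
  have hk_ev : ∀ᶠ n in atTop, 1 - ν.real A / 2 < (k n : ℝ) / n :=
    hk1.eventually (eventually_gt_nhds (by linarith))
  filter_upwards [hfreq] with y hy
  filter_upwards [hy, hk_ev, eventually_ge_atTop 1] with n hn hkn hn1
  refine lt_ordStat_of_card_lt (hk n hn1).1 (hk n hn1).2 ?_
  have hn0 : (0 : ℝ) < n := by exact_mod_cast hn1
  rw [birkhoffAverage, hA_def, birkhoffSum_seqShift_indicator, smul_eq_mul, ← div_eq_inv_mul,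
    lt_div_iff₀ hn0] at hn
  rw [lt_div_iff₀ hn0] at hkn
  have hsplit := card_filter_add_card_filter_not (s := range n) (p := fun i => c < y i)
  simp only [not_lt, card_range] at hsplit
  have hsplit' : (#{i ∈ range n | c < y i} : ℝ) + #{i ∈ range n | y i ≤ c} = n := by
    exact_mod_cast hsplit
  exact_mod_cast (by linarith : (#{i ∈ range n | y i ≤ c} : ℝ) < k n)

theorem ae_tendsto_ordStat_of_ergodic (herg : Ergodic seqShift ν) {γ : ℝ}
    (hγ_le : ν {y | γ < y 0} = 0) (hγ_lt : ∀ r < γ, ν {y | y 0 ≤ r} < 1)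
    {k : ℕ → ℕ} (hk : ∀ n, 1 ≤ n → 1 ≤ k n ∧ k n ≤ n)
    (hk1 : Tendsto (fun n => (k n : ℝ) / n) atTop (𝓝 1)) :
    ∀ᵐ y ∂ν, Tendsto (fun n => ordStat (k n) n y) atTop (𝓝 γ) := by
  have hlower : ∀ᵐ y ∂ν, ∀ m : ℕ, ∀ᶠ n in atTop, γ - 1 / (m + 1) < ordStat (k n) n y :=
    ae_all_iff.mpr fun m =>
      ae_eventually_lt_ordStat herg (hγ_lt _ (sub_lt_self γ Nat.one_div_pos_of_nat)) hk hk1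
  filter_upwards [hlower, ae_forall_apply_le_of_measurePreserving herg.toMeasurePreserving hγ_le]
    with y hy_lower hy_le
  refine tendsto_order.mpr ⟨fun a ha => ?_, fun a ha => ?_⟩
  · obtain ⟨m, hm⟩ := exists_nat_one_div_lt (sub_pos.mpr ha)
    exact (hy_lower m).mono fun n hn => by linarith
  · filter_upwards [eventually_ge_atTop 1] with n hn
    obtain ⟨i, -, hi⟩ := exists_ordStat_eq (hk n hn).1 (hk n hn).2 y
    exact hi ▸ (hy_le i).trans_lt ha

end Shift

section RightEndpoint

variable {Ω : Type*} [MeasurableSpace Ω] {μ : Measure Ω} {X : Ω → ℝ}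

lemma measure_le_lt_one_of_lt_rightEndpoint {r : ℝ} (h : (r : EReal) < rightEndpoint μ X) :
    μ {ω | X ω ≤ r} < 1 := by
  obtain ⟨_, ⟨s, hs, rfl⟩, hrs⟩ := lt_sSup_iff.mp h
  exact (measure_mono fun ω (hω : X ω ≤ r) => hω.trans (EReal.coe_lt_coe_iff.mp hrs).le).trans_lt hs

lemma measure_lt_eq_zero_of_rightEndpoint_le [IsProbabilityMeasure μ] (hX : Measurable X)
    {γ : ℝ} (h : rightEndpoint μ X ≤ γ) : μ {ω | γ < X ω} = 0 := by
  have hunion : {ω | γ < X ω} = ⋃ j : ℕ, {ω | X ω ≤ γ + 1 / (j + 1)}ᶜ := by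
    ext ω
    simp only [Set.mem_ofPred_eq, mem_iUnion, mem_compl_iff, not_le]
    refine ⟨fun hω => ?_, fun ⟨j, hj⟩ => lt_of_le_of_lt ?_ hj⟩
    · obtain ⟨j, hj⟩ := exists_nat_one_div_lt (sub_pos.mpr hω)
      exact ⟨j, by linarith⟩
    · linarith [Nat.one_div_pos_of_nat (α := ℝ) (n := j)]
  rw [hunion]
  refine measure_iUnion_null fun j => ?_
  rw [prob_compl_eq_zero_iff (measurableSet_le hX measurable_const)]
  refine le_antisymm prob_le_one (not_lt.mp fun hlt => ?_)
  have hle : ((γ + 1 / (j + 1) : ℝ) : EReal) ≤ γ :=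
    (le_sSup (Set.mem_image_of_mem (fun r : ℝ => (r : EReal)) hlt)).trans h
  linarith [EReal.coe_le_coe_iff.mp hle, Nat.one_div_pos_of_nat (α := ℝ) (n := j)]

end RightEndpoint

theorem stmt8 {Ω : Type*} [MeasurableSpace Ω] (μ : Measure Ω) [IsProbabilityMeasure μ]
    (X : ℕ → Ω → ℝ) (hX : ∀ n, Measurable (X n))
    (herg : Ergodic seqShift (Measure.map (path X) μ))
    (γ : ℝ) (hγ : rightEndpoint μ (X 0) = (γ : EReal))
    (k : ℕ → ℕ) (hk : ∀ n, 1 ≤ n → 1 ≤ k n ∧ k n ≤ n)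
    (hk1 : Tendsto (fun n => (k n : ℝ) / n) atTop (𝓝 1)) :
    ∀ᵐ ω ∂μ, Tendsto (fun n => ordStat (k n) n (path X ω)) atTop (𝓝 γ) := by
  have hpath : Measurable (path X) := measurable_pi_lambda _ hX
  have : IsProbabilityMeasure (μ.map (path X)) :=
    Measure.isProbabilityMeasure_map hpath.aemeasurable
  refine ae_of_ae_map hpath.aemeasurable (ae_tendsto_ordStat_of_ergodic herg ?_ ?_ hk hk1)
  · rw [Measure.map_apply hpath (measurableSet_lt measurable_const (measurable_pi_apply 0))]
    exact measure_lt_eq_zero_of_rightEndpoint_le (hX 0) hγ.le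
  · intro r hr
    rw [Measure.map_apply hpath (measurableSet_le (measurable_pi_apply 0) measurable_const)]
    exact measure_le_lt_one_of_lt_rightEndpoint (hγ ▸ EReal.coe_lt_coe_iff.mpr hr)
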